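/- arXiv:2512.04675 — 6 statements merged into one kernel-verified Lean document; each statement's English description precedes it below -/
import Mathlib

section
/- Let n, m, dG, dF be natural numbers with dG ≤ n and 1 ≤ dF. Let F : 𝔽₂ⁿ → 𝔽₂ⁿ be a bijection whose inverse F⁻¹ has algebraic degree at most dF, and let G : 𝔽₂ⁿ → 𝔽₂ᵐ have algebraic degree at most dG. Then the composition G ∘ F has algebraic degree at most n − ⌈(n − dG)/dF⌉ (ceiling division). -/
/-- A Boolean function `f : 𝔽₂ⁿ → 𝔽₂` has algebraic degree at most `d`. -/
def HasAlgDegLE {n : ℕ} (f : (Fin n → ZMod 2) → ZMod 2) (d : ℕ) : Prop :=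
  ∃ P : MvPolynomial (Fin n) (ZMod 2),
    P.totalDegree ≤ d ∧ ∀ x, MvPolynomial.eval x P = f x

/-- A vectorial function `F : 𝔽₂ⁿ → 𝔽₂ᵐ` has algebraic degree at most `d`. -/
def VecHasAlgDegLE {n m : ℕ} (F : (Fin n → ZMod 2) → (Fin m → ZMod 2)) (d : ℕ) : Prop :=
  ∀ j : Fin m, HasAlgDegLE (fun x => F x j) d

open MvPolynomial Finset

namespace CarletAux

variable {n : ℕ}

/-- indicator vector of a finset -/
def ind (T : Finset (Fin n)) : Fin n → ZMod 2 := fun i => if i ∈ T then 1 else 0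

lemma zmod2_cases (a : ZMod 2) : a = 0 ∨ a = 1 := by revert a; decide

/-- cube equiv -/
def cubeEquiv (n : ℕ) : Finset (Fin n) ≃ (Fin n → ZMod 2) where
  toFun := ind
  invFun x := Finset.univ.filter (fun i => x i = 1)
  left_inv T := by ext i; simp [ind]
  right_inv x := by
    funext i
    rcases zmod2_cases (x i) with h | h <;> simp [ind, h]

lemma prod_ind (S T : Finset (Fin n)) :
    (∏ i ∈ S, ind T i) = if S ⊆ T then 1 else 0 := by
  unfold ind
  rw [Finset.prod_boole]
  simp [Finset.subset_iff]

lemma pow_eval (a : ZMod 2) {k : ℕ} (hk : k ≠ 0) : a ^ k = a := by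
  rcases zmod2_cases a with h | h <;> simp [h, zero_pow hk]

lemma filter_powerset_eq (S T : Finset (Fin n)) (hST : S ⊆ T) :
    T.powerset.filter (fun U => S ⊆ U) = (T \ S).powerset.image (fun V => S ∪ V) := by
  ext U
  simp only [Finset.mem_filter, Finset.mem_powerset, Finset.mem_image]
  constructor
  · rintro ⟨hUT, hSU⟩
    exact ⟨U \ S, by intro i hi; simp only [Finset.mem_sdiff] at *; exact ⟨hUT hi.1, hi.2⟩,
      by rw [Finset.union_sdiff_of_subset hSU]⟩
  · rintro ⟨V, hV, rfl⟩
    exact ⟨Finset.union_subset hST (hV.trans (Finset.sdiff_subset)), Finset.subset_union_left⟩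

lemma card_filter_powerset (S T : Finset (Fin n)) (hST : S ⊆ T) :
    (T.powerset.filter (fun U => S ⊆ U)).card = 2 ^ (T.card - S.card) := by
  rw [filter_powerset_eq S T hST, Finset.card_image_of_injOn, Finset.card_powerset,
    Finset.card_sdiff_of_subset hST]
  intro V₁ h₁ V₂ h₂ h
  simp only [Finset.coe_powerset, Set.mem_preimage, Set.mem_powerset_iff,
    Finset.coe_subset, Finset.mem_coe, Finset.mem_powerset] at h₁ h₂
  have d₁ : Disjoint S V₁ := Finset.disjoint_left.2 fun i hi hiV =>
    (Finset.mem_sdiff.1 (h₁ hiV)).2 hi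
  have d₂ : Disjoint S V₂ := Finset.disjoint_left.2 fun i hi hiV =>
    (Finset.mem_sdiff.1 (h₂ hiV)).2 hi
  have : (S ∪ V₁) \ S = (S ∪ V₂) \ S := by simp only at h; rw [h]
  rwa [Finset.union_sdiff_cancel_left d₁, Finset.union_sdiff_cancel_left d₂] at this

lemma sum_boole_powerset (S T : Finset (Fin n)) :
    (∑ U ∈ T.powerset, if S ⊆ U then (1 : ZMod 2) else 0) = if S = T then 1 else 0 := by
  rw [Finset.sum_boole]
  by_cases hST : S ⊆ T
  · rw [card_filter_powerset S T hST]
    by_cases hEq : S = T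
    · subst hEq; simp
    · have hlt : S.card < T.card := Finset.card_lt_card (lt_of_le_of_ne hST hEq)
      have : (T.card - S.card) ≠ 0 := by omega
      rw [if_neg hEq]
      push_cast
      rw [pow_eval _ this]
      decide
  · have : T.powerset.filter (fun U => S ⊆ U) = ∅ := by
      rw [Finset.filter_eq_empty_iff]
      intro U hU hSU
      exact hST (hSU.trans (Finset.mem_powerset.1 hU))
    rw [this]
    have : S ≠ T := fun h => hST (h ▸ le_refl T)
    simp [this]

/-- ANF coefficient. -/
def coef (f : (Fin n → ZMod 2) → ZMod 2) (T : Finset (Fin n)) : ZMod 2 :=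
  ∑ U ∈ T.powerset, f (ind U)

lemma inversion (f : (Fin n → ZMod 2) → ZMod 2) (T : Finset (Fin n)) :
    ∑ U ∈ T.powerset, coef f U = f (ind T) := by
  unfold coef
  have step : ∀ U ∈ T.powerset,
      (∑ V ∈ U.powerset, f (ind V))
        = ∑ V ∈ T.powerset, (if V ⊆ U then (1 : ZMod 2) else 0) * f (ind V) := by
    intro U hU
    rw [Finset.mem_powerset] at hU
    simp only [ite_mul, one_mul, zero_mul]
    rw [← Finset.sum_filter]
    congr 1
    ext V
    simp only [Finset.mem_filter, Finset.mem_powerset]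
    exact ⟨fun h => ⟨h.trans hU, h⟩, fun h => h.2⟩
  rw [Finset.sum_congr rfl step, Finset.sum_comm]
  have : ∀ V ∈ T.powerset,
      (∑ U ∈ T.powerset, (if V ⊆ U then (1 : ZMod 2) else 0) * f (ind V))
        = (if V = T then 1 else 0) * f (ind V) := by
    intro V _
    rw [← Finset.sum_mul, sum_boole_powerset]
  rw [Finset.sum_congr rfl this]
  simp only [ite_mul, one_mul, zero_mul]
  rw [Finset.sum_ite_eq' T.powerset T (fun V => f (ind V))]
  simp

lemma exists_poly (f : (Fin n → ZMod 2) → ZMod 2) (d : ℕ)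
    (hvan : ∀ T : Finset (Fin n), d < T.card → coef f T = 0) :
    HasAlgDegLE f d := by
  classical
  refine ⟨∑ T ∈ (Finset.univ : Finset (Finset (Fin n))).filter (fun T => T.card ≤ d),
      MvPolynomial.C (coef f T) * ∏ i ∈ T, MvPolynomial.X i, ?_, ?_⟩
  · refine (MvPolynomial.totalDegree_finset_sum _ _).trans ?_
    apply Finset.sup_le
    intro T hT
    rw [Finset.mem_filter] at hT
    calc (MvPolynomial.C (coef f T) * ∏ i ∈ T, MvPolynomial.X i).totalDegree
        ≤ (MvPolynomial.C (coef f T)).totalDegree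
          + (∏ i ∈ T, (MvPolynomial.X i : MvPolynomial (Fin n) (ZMod 2))).totalDegree :=
          MvPolynomial.totalDegree_mul _ _
      _ ≤ 0 + ∑ i ∈ T, (MvPolynomial.X i : MvPolynomial (Fin n) (ZMod 2)).totalDegree := by
          gcongr
          · exact le_of_eq (MvPolynomial.totalDegree_C _)
          · exact MvPolynomial.totalDegree_finset_prod _ _
      _ ≤ d := by simp [MvPolynomial.totalDegree_X]; exact hT.2
  · intro x
    have hx : x = ind ((cubeEquiv n).symm x) := ((cubeEquiv n).apply_symm_apply x).symm
    rw [hx]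
    set S := (cubeEquiv n).symm x with hS
    rw [map_sum]
    have heval : ∀ T : Finset (Fin n),
        MvPolynomial.eval (ind S) (MvPolynomial.C (coef f T) * ∏ i ∈ T, MvPolynomial.X i)
          = (if T ⊆ S then (1:ZMod 2) else 0) * coef f T := by
      intro T
      rw [map_mul, MvPolynomial.eval_C, map_prod]
      simp only [MvPolynomial.eval_X]
      rw [prod_ind, mul_comm]
    rw [Finset.sum_congr rfl (fun T _ => heval T)]
    rw [Finset.sum_filter]
    have : ∀ T : Finset (Fin n),
        (if T.card ≤ d then (if T ⊆ S then (1:ZMod 2) else 0) * coef f T else 0)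
          = (if T ⊆ S then (1:ZMod 2) else 0) * coef f T := by
      intro T
      by_cases h1 : T.card ≤ d
      · rw [if_pos h1]
      · rw [if_neg h1, hvan T (by omega), mul_zero]
    rw [Finset.sum_congr rfl (fun T _ => this T)]
    have : (∑ T : Finset (Fin n), (if T ⊆ S then (1:ZMod 2) else 0) * coef f T)
        = ∑ T ∈ S.powerset, coef f T := by
      simp only [ite_mul, one_mul, zero_mul]
      rw [← Finset.sum_filter]
      congr 1
      ext T
      simp
    rw [this, inversion]

lemma card_support_le_sum (m : Fin n →₀ ℕ) : m.support.card ≤ m.sum (fun _ e => e) := by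
  rw [Finsupp.sum, Finset.card_eq_sum_ones m.support]
  exact Finset.sum_le_sum fun i hi => Nat.one_le_iff_ne_zero.2 (Finsupp.mem_support_iff.1 hi)

lemma sum_eval_eq_zero (P : MvPolynomial (Fin n) (ZMod 2)) (h : P.totalDegree < n) :
    ∑ x : Fin n → ZMod 2, MvPolynomial.eval x P = 0 := by
  rw [← Equiv.sum_comp (cubeEquiv n) (fun x => MvPolynomial.eval x P)]
  have heval : ∀ T : Finset (Fin n), MvPolynomial.eval (ind T) P
      = ∑ m ∈ P.support, P.coeff m * if m.support ⊆ T then (1 : ZMod 2) else 0 := by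
    intro T
    rw [MvPolynomial.eval_eq]
    apply Finset.sum_congr rfl
    intro m _
    congr 1
    rw [← prod_ind m.support T]
    exact Finset.prod_congr rfl fun i hi => pow_eval _ (Finsupp.mem_support_iff.1 hi)
  have : ∀ T : Finset (Fin n), (cubeEquiv n) T = ind T := fun _ => rfl
  simp only [this, heval]
  rw [Finset.sum_comm]
  apply Finset.sum_eq_zero
  intro m hm
  rw [← Finset.mul_sum]
  have huniv : (Finset.univ : Finset (Finset (Fin n)))
      = (Finset.univ : Finset (Fin n)).powerset := Finset.powerset_univ.symm
  rw [huniv, sum_boole_powerset]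
  have hne : m.support ≠ Finset.univ := by
    intro hEq
    have h1 : m.support.card ≤ P.totalDegree :=
      (card_support_le_sum m).trans (MvPolynomial.le_totalDegree hm)
    have h2 : m.support.card = n := by rw [hEq]; simp
    omega
  rw [if_neg hne, mul_zero]

lemma orth (f g : (Fin n → ZMod 2) → ZMod 2) (df dg : ℕ)
    (hf : HasAlgDegLE f df) (hg : HasAlgDegLE g dg) (h : df + dg < n) :
    ∑ x : Fin n → ZMod 2, f x * g x = 0 := by
  obtain ⟨P, hP, hPe⟩ := hf
  obtain ⟨Q, hQ, hQe⟩ := hg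
  have : ∀ x, f x * g x = MvPolynomial.eval x (P * Q) := by
    intro x; rw [map_mul, hPe, hQe]
  simp only [this]
  exact sum_eval_eq_zero _ (lt_of_le_of_lt (MvPolynomial.totalDegree_mul P Q) (by omega))

lemma prod_deg {ι : Type*} (s : Finset ι) (f : ι → (Fin n → ZMod 2) → ZMod 2) (d : ℕ)
    (h : ∀ i, HasAlgDegLE (f i) d) :
    HasAlgDegLE (fun x => ∏ i ∈ s, f i x) (s.card * d) := by
  choose P hP hPe using h
  refine ⟨∏ i ∈ s, P i, ?_, ?_⟩
  · refine (MvPolynomial.totalDegree_finset_prod s P).trans ?_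
    calc (∑ i ∈ s, (P i).totalDegree) ≤ ∑ _i ∈ s, d := Finset.sum_le_sum fun i _ => hP i
      _ = s.card * d := by rw [Finset.sum_const, smul_eq_mul]
  · intro x
    rw [map_prod]
    exact Finset.prod_congr rfl fun i _ => hPe i x

lemma coef_vanish {dG dF : ℕ} (F Finv : (Fin n → ZMod 2) → (Fin n → ZMod 2))
    (hFbij : Function.Bijective F) (hleft : Function.LeftInverse Finv F)
    (hFinv : VecHasAlgDegLE Finv dF)
    (g : (Fin n → ZMod 2) → ZMod 2) (hg : HasAlgDegLE g dG)
    (T : Finset (Fin n)) (hdeg : dG + (Finset.univ \ T).card * dF < n) :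
    coef (fun x => g (F x)) T = 0 := by
  classical
  -- the weight function
  set w : (Fin n → ZMod 2) → ZMod 2 :=
    fun y => ∏ i ∈ Finset.univ \ T, (1 + Finv y i) with hw
  have key : coef (fun x => g (F x)) T = ∑ y : Fin n → ZMod 2, g y * w y := by
    -- step 1: rewrite coef as a full-cube sum with an indicator weight
    have hInd : ∀ V : Finset (Fin n),
        (∏ i ∈ Finset.univ \ T, (1 + ind V i)) = if V ⊆ T then (1 : ZMod 2) else 0 := by
      intro V
      have hfac : ∀ i : Fin n, (1 + ind V i) = if i ∉ V then (1 : ZMod 2) else 0 := by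
        intro i
        unfold ind
        by_cases h : i ∈ V <;> simp [h] <;> decide
      simp only [hfac]
      rw [Finset.prod_boole]
      congr 1
      simp only [eq_iff_iff]
      constructor
      · intro hall i hiV
        by_contra hiT
        exact hall i (Finset.mem_sdiff.2 ⟨Finset.mem_univ i, hiT⟩) hiV
      · intro hVT i hi hiV
        exact (Finset.mem_sdiff.1 hi).2 (hVT hiV)
    have step1 : coef (fun x => g (F x)) T
        = ∑ V : Finset (Fin n), g (F (ind V)) * (∏ i ∈ Finset.univ \ T, (1 + ind V i)) := by
      unfold coef
      simp only [hInd, mul_ite, mul_one, mul_zero]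
      rw [← Finset.sum_filter]
      congr 1
      ext V
      simp
    -- step 2: transport along the cube equivalence and the bijection F
    rw [step1]
    have step2 : (∑ V : Finset (Fin n),
          g (F (ind V)) * (∏ i ∈ Finset.univ \ T, (1 + ind V i)))
        = ∑ x : Fin n → ZMod 2, g (F x) * (∏ i ∈ Finset.univ \ T, (1 + x i)) := by
      exact Equiv.sum_comp (cubeEquiv n)
        (fun x => g (F x) * (∏ i ∈ Finset.univ \ T, (1 + x i)))
    rw [step2]
    have step3 : ∀ x, g (F x) * (∏ i ∈ Finset.univ \ T, (1 + x i)) = (g (F x)) * w (F x) := by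
      intro x
      rw [hw]
      simp only [hleft x]
    simp only [step3]
    exact hFbij.sum_comp (fun y => g y * w y)
  rw [key]
  apply orth g w dG ((Finset.univ \ T).card * dF) hg _ hdeg
  exact prod_deg (Finset.univ \ T) (fun i y => 1 + Finv y i) dF (fun i => by
    obtain ⟨Q, hQ, hQe⟩ := hFinv i
    refine ⟨1 + Q, ?_, ?_⟩
    · refine (MvPolynomial.totalDegree_add _ _).trans ?_
      simp [MvPolynomial.totalDegree_one, hQ]
    · intro y; rw [map_add, map_one, hQe])

end CarletAux

/-- Carlet's bound: `deg (G ∘ F) ≤ n − ⌈(n − deg G) / deg (F⁻¹)⌉`. -/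
theorem carlet_degree_bound (n m dG dF : ℕ) (hdG : dG ≤ n) (hdF : 1 ≤ dF)
    (F Finv : (Fin n → ZMod 2) → (Fin n → ZMod 2))
    (hFbij : Function.Bijective F)
    (hleft : Function.LeftInverse Finv F) (hright : Function.RightInverse Finv F)
    (hFinv : VecHasAlgDegLE Finv dF)
    (G : (Fin n → ZMod 2) → (Fin m → ZMod 2)) (hG : VecHasAlgDegLE G dG) :
    VecHasAlgDegLE (G ∘ F) (n - (n - dG) ⌈/⌉ dF) := by
  intro j
  apply CarletAux.exists_poly
  intro T hT
  have hTn : T.card ≤ n := by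
    have := Finset.card_le_card (Finset.subset_univ T)
    simpa using this
  have hcard : (Finset.univ \ T).card = n - T.card := by
    rw [Finset.card_sdiff_of_subset (Finset.subset_univ T)]
    simp
  have hc : (n - T.card) < (n - dG) ⌈/⌉ dF := by omega
  have hmul : dF * (n - T.card) < n - dG := by
    by_contra hcon
    have : (n - dG) ⌈/⌉ dF ≤ (n - T.card) :=
      (ceilDiv_le_iff_le_mul (by omega : 0 < dF)).2 (by omega)
    omega
  exact CarletAux.coef_vanish F Finv hFbij hleft hFinv (fun y => G y j) (hG j) T
    (by rw [hcard, mul_comm]; omega)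
end

section
/- Let F₁, …, F₆ : 𝔽₂¹²⁸ → 𝔽₂¹²⁸ each have algebraic degree at most 2, and set E = F₆ ∘ F₅ ∘ F₄ ∘ F₃ ∘ F₂ ∘ F₁. Then for every set I of 65 coordinates and every c : Fin 128 → ZMod 2, the sum over all x in the coordinate-affine set V(I,c) of the vector E(x) equals the zero vector of 𝔽₂¹²⁸. -/
open MvPolynomial Finset in
lemma hasAlgDegLE_comp {n m : ℕ} {F : (Fin n → ZMod 2) → (Fin m → ZMod 2)}
    {g : (Fin m → ZMod 2) → ZMod 2} {d e : ℕ}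
    (hF : VecHasAlgDegLE F d) (hg : HasAlgDegLE g e) :
    HasAlgDegLE (fun x => g (F x)) (e * d) := by
  obtain ⟨Q, hQd, hQ⟩ := hg
  choose P hPd hP using hF
  refine ⟨∑ v ∈ Q.support, MvPolynomial.C (Q.coeff v) * ∏ j ∈ v.support, (P j) ^ (v j), ?_, ?_⟩
  · refine (totalDegree_finset_sum _ _).trans (Finset.sup_le fun v hv => ?_)
    refine (totalDegree_mul _ _).trans ?_
    rw [totalDegree_C, zero_add]
    refine (totalDegree_finset_prod _ _).trans ?_
    calc ∑ j ∈ v.support, ((P j) ^ (v j)).totalDegree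
        ≤ ∑ j ∈ v.support, v j * d := by
          exact Finset.sum_le_sum fun j _ =>
            (totalDegree_pow _ _).trans (Nat.mul_le_mul_left _ (hPd j))
      _ = (∑ j ∈ v.support, v j) * d := by rw [Finset.sum_mul]
      _ ≤ e * d := Nat.mul_le_mul_right _ ((le_totalDegree hv).trans hQd)
  · intro x
    show _ = g (F x)
    rw [← hQ (F x)]
    conv_rhs => rw [← Q.support_sum_monomial_coeff]
    rw [map_sum, map_sum]
    refine Finset.sum_congr rfl fun v hv => ?_
    rw [eval_monomial, map_mul, eval_C, map_prod, Finsupp.prod]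
    congr 1
    exact Finset.prod_congr rfl fun j _ => by rw [map_pow, hP j x]

open MvPolynomial Finset in
lemma sum_eq_zero_of_deg_lt {n : ℕ} {g : (Fin n → ZMod 2) → ZMod 2} {d : ℕ}
    (hg : HasAlgDegLE g d) (I : Finset (Fin n)) (hd : d < I.card) (c : Fin n → ZMod 2) :
    ∑ x ∈ Finset.univ.filter (fun x : Fin n → ZMod 2 => ∀ i ∉ I, x i = c i), g x = 0 := by
  obtain ⟨P, hPd, hP⟩ := hg
  have : ∀ x, g x = ∑ v ∈ P.support, eval x (monomial v (P.coeff v)) := by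
    intro x
    rw [← hP x]
    conv_lhs => rw [← P.support_sum_monomial_coeff]
    rw [map_sum]
  simp_rw [this]
  rw [Finset.sum_comm]
  refine Finset.sum_eq_zero fun v hv => ?_
  -- find i₀ ∈ I not in the support of the monomial v
  have hcard : v.support.card ≤ d := by
    calc v.support.card = ∑ j ∈ v.support, 1 := by simp
      _ ≤ ∑ j ∈ v.support, v j := Finset.sum_le_sum fun j hj =>
          Nat.one_le_iff_ne_zero.2 (Finsupp.mem_support_iff.1 hj)
      _ ≤ P.totalDegree := le_totalDegree hv
      _ ≤ d := hPd
  have hex : ∃ i₀ ∈ I, i₀ ∉ v.support := by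
    by_contra h
    push_neg at h
    exact absurd (Finset.card_le_card h) (by omega)
  obtain ⟨i₀, hi₀I, hi₀v⟩ := hex
  refine Finset.sum_involution
    (fun x _ => Function.update x i₀ (x i₀ + 1)) ?_ ?_ ?_ ?_
  · intro x hx
    have hval : eval (Function.update x i₀ (x i₀ + 1)) (monomial v (P.coeff v))
        = eval x (monomial v (P.coeff v)) := by
      rw [eval_monomial, eval_monomial]
      congr 1
      refine Finsupp.prod_congr fun j hj => ?_
      have : j ≠ i₀ := fun h => hi₀v (h ▸ hj)
      rw [Function.update_of_ne this]
    rw [hval]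
    exact CharTwo.add_self_eq_zero _
  · intro x hx _
    intro h
    have := congrFun h i₀
    simp only [Function.update_self] at this
    exact one_ne_zero (by linear_combination this)
  · intro x hx
    simp only [Finset.mem_filter, Finset.mem_univ, true_and] at hx ⊢
    intro i hi
    have : i ≠ i₀ := fun h => hi (h ▸ hi₀I)
    rw [Function.update_of_ne this]
    exact hx i hi
  · intro x hx
    funext i
    by_cases h : i = i₀
    · subst h
      simp only [Function.update_self]
      rw [add_assoc, show (1:ZMod 2)+1 = 0 from rfl, add_zero]
    · simp [Function.update_of_ne h]

/-- The 6-round integral distinguisher for Branch1/Branch2 of Gleeok-128 with data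
complexity `2^65`: six round functions of degree at most 2 compose to degree at most
`2^6 = 64 < 65`, so over any coordinate-affine set with 65 active bits all output
bits are balanced. -/
theorem six_round_integral_distinguisher
    (F₁ F₂ F₃ F₄ F₅ F₆ : (Fin 128 → ZMod 2) → (Fin 128 → ZMod 2))
    (h₁ : VecHasAlgDegLE F₁ 2) (h₂ : VecHasAlgDegLE F₂ 2) (h₃ : VecHasAlgDegLE F₃ 2)
    (h₄ : VecHasAlgDegLE F₄ 2) (h₅ : VecHasAlgDegLE F₅ 2) (h₆ : VecHasAlgDegLE F₆ 2)
    (I : Finset (Fin 128)) (hI : I.card = 65) (c : Fin 128 → ZMod 2) :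
    ∑ x ∈ Finset.univ.filter (fun x : Fin 128 → ZMod 2 => ∀ i ∉ I, x i = c i),
      (F₆ ∘ F₅ ∘ F₄ ∘ F₃ ∘ F₂ ∘ F₁) x = 0 := by
  have g12 : VecHasAlgDegLE (fun x => F₂ (F₁ x)) 4 := fun j =>
    hasAlgDegLE_comp h₁ (h₂ j)
  have g123 : VecHasAlgDegLE (fun x => F₃ (F₂ (F₁ x))) 8 := fun j =>
    hasAlgDegLE_comp g12 (h₃ j)
  have g1234 : VecHasAlgDegLE (fun x => F₄ (F₃ (F₂ (F₁ x)))) 16 := fun j =>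
    hasAlgDegLE_comp g123 (h₄ j)
  have g12345 : VecHasAlgDegLE (fun x => F₅ (F₄ (F₃ (F₂ (F₁ x))))) 32 := fun j =>
    hasAlgDegLE_comp g1234 (h₅ j)
  have gE : VecHasAlgDegLE (fun x => F₆ (F₅ (F₄ (F₃ (F₂ (F₁ x)))))) 64 := fun j =>
    hasAlgDegLE_comp g12345 (h₆ j)
  funext j
  rw [Finset.sum_apply]
  simp only [Function.comp_apply, Pi.zero_apply]
  exact sum_eq_zero_of_deg_lt (gE j) I (by omega) c
end

section
/- Let F₁, …, F₉ be bijections of 𝔽₂¹²⁸ such that each Fᵢ has algebraic degree at most 2 and each inverse Fᵢ⁻¹ has algebraic degree at most 3. Then the composition E = F₉ ∘ ⋯ ∘ F₁ has algebraic degree at most 125. -/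
namespace NineRoundAux

open MvPolynomial Finset

abbrev V (n : ℕ) := Fin n → ZMod 2

lemma zmod2_add_self (a : ZMod 2) : a + a = 0 := by revert a; decide

/-- Sum of a monomial missing some variable over all of 𝔽₂ⁿ is zero. -/
lemma sum_eval_monomial_zero {n : ℕ} (v : Fin n →₀ ℕ) (c : ZMod 2)
    (hv : ∃ i, v i = 0) :
    ∑ x : V n, MvPolynomial.eval x (monomial v c) = 0 := by
  obtain ⟨i₀, hi₀⟩ := hv
  apply Finset.sum_ninvolution (fun x => Function.update x i₀ (x i₀ + 1))
  · intro x
    have heq : MvPolynomial.eval (Function.update x i₀ (x i₀ + 1)) (monomial v c)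
        = MvPolynomial.eval x (monomial v c) := by
      rw [eval_monomial, eval_monomial]
      congr 1
      apply Finsupp.prod_congr
      intro j hj
      have hji : j ≠ i₀ := by
        rintro rfl
        exact (Finsupp.mem_support_iff.mp hj) hi₀
      rw [Function.update_of_ne hji]
    rw [heq, zmod2_add_self]
  · intro x _ h
    have h1 : ∀ a : ZMod 2, a + 1 ≠ a := by decide
    have := congrFun h i₀
    rw [Function.update_self] at this
    exact h1 _ this
  · intro x; exact Finset.mem_univ _
  · intro x
    funext j
    rcases eq_or_ne j i₀ with rfl | hne
    · have h2 : ∀ a : ZMod 2, a + 1 + 1 = a := by decide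
      simp [Function.update_self, h2]
    · simp [Function.update_of_ne hne]

/-- Sum of a polynomial of total degree `< n` over all of 𝔽₂ⁿ is zero. -/
lemma sum_eval_eq_zero {n : ℕ} (P : MvPolynomial (Fin n) (ZMod 2))
    (h : P.totalDegree < n) :
    ∑ x : V n, MvPolynomial.eval x P = 0 := by
  calc ∑ x : V n, MvPolynomial.eval x P
      = ∑ x : V n, ∑ v ∈ P.support, MvPolynomial.eval x (monomial v (coeff v P)) := by
        refine Finset.sum_congr rfl fun x _ => ?_
        rw [← map_sum, ← P.as_sum]
    _ = ∑ v ∈ P.support, ∑ x : V n, MvPolynomial.eval x (monomial v (coeff v P)) :=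
        Finset.sum_comm
    _ = 0 := by
        refine Finset.sum_eq_zero fun v hv => ?_
        apply sum_eval_monomial_zero
        by_contra hc
        push_neg at hc
        have hall : ∀ i, 1 ≤ v i := fun i => Nat.one_le_iff_ne_zero.mpr (hc i)
        have h1 : (n : ℕ) ≤ ∑ i : Fin n, v i := by
          calc n = ∑ _i : Fin n, 1 := by simp
            _ ≤ ∑ i : Fin n, v i := Finset.sum_le_sum fun i _ => hall i
        have h2 : (∑ i : Fin n, v i) ≤ P.totalDegree := by
          have := MvPolynomial.le_totalDegree hv
          rwa [Finsupp.sum_fintype _ _ (fun _ => rfl)] at this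
        omega

lemma prod_delta {n : ℕ} (x y : V n) :
    (∏ i, (x i + y i + 1)) = if x = y then 1 else 0 := by
  rcases eq_or_ne x y with rfl | hne
  · rw [if_pos rfl]
    apply Finset.prod_eq_one
    intro i _
    have h1 : ∀ a : ZMod 2, a + a + 1 = 1 := by decide
    exact h1 _
  · rw [if_neg hne]
    obtain ⟨i, hi⟩ := Function.ne_iff.1 hne
    apply Finset.prod_eq_zero (Finset.mem_univ i)
    have h0 : ∀ a b : ZMod 2, a ≠ b → a + b + 1 = 0 := by decide
    exact h0 _ _ hi

/-- ANF coefficient of `f` at the monomial indexed by `S`. -/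
noncomputable def anfCoef {n : ℕ} (f : V n → ZMod 2) (S : Finset (Fin n)) : ZMod 2 :=
  ∑ y : V n, f y * ∏ i ∈ Sᶜ, (1 + y i)

/-- The algebraic normal form of `f`. -/
noncomputable def anf {n : ℕ} (f : V n → ZMod 2) : MvPolynomial (Fin n) (ZMod 2) :=
  ∑ S : Finset (Fin n), C (anfCoef f S) * ∏ i ∈ S, X i

lemma sum_prod_delta {n : ℕ} (x y : V n) :
    ∑ S : Finset (Fin n), (∏ i ∈ S, x i) * ∏ i ∈ Sᶜ, (1 + y i)
      = ∏ i, (x i + y i + 1) := by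
  have h := Finset.prod_add (fun i => x i) (fun i => 1 + y i) (Finset.univ : Finset (Fin n))
  rw [Finset.powerset_univ] at h
  have h2 : ∏ i, (x i + (1 + y i)) = ∏ i, (x i + y i + 1) :=
    Finset.prod_congr rfl fun i _ => by ring
  rw [← h2, h]
  refine Finset.sum_congr rfl fun S _ => ?_
  rw [Finset.compl_eq_univ_sdiff]

lemma eval_anf {n : ℕ} (f : V n → ZMod 2) (x : V n) :
    MvPolynomial.eval x (anf f) = f x := by
  rw [anf, map_sum]
  simp only [map_mul, eval_C, map_prod, eval_X, anfCoef, Finset.sum_mul]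
  rw [Finset.sum_comm]
  calc ∑ y : V n, ∑ S : Finset (Fin n), f y * (∏ i ∈ Sᶜ, (1 + y i)) * ∏ i ∈ S, x i
      = ∑ y : V n, f y * ∏ i, (x i + y i + 1) := by
        refine Finset.sum_congr rfl fun y _ => ?_
        rw [← sum_prod_delta x y, Finset.mul_sum]
        refine Finset.sum_congr rfl fun S _ => by ring
    _ = f x := by
        simp only [prod_delta, mul_ite, mul_one, mul_zero]
        simp

lemma hasAlgDegLE_of_coef {n D : ℕ} (f : V n → ZMod 2)
    (h : ∀ S : Finset (Fin n), D < S.card → anfCoef f S = 0) :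
    HasAlgDegLE f D := by
  refine ⟨anf f, ?_, eval_anf f⟩
  refine le_trans (totalDegree_finset_sum _ _) (Finset.sup_le fun S _ => ?_)
  by_cases hS : D < S.card
  · simp [h S hS]
  · refine le_trans (totalDegree_mul _ _) ?_
    rw [totalDegree_C, zero_add]
    refine le_trans (totalDegree_finset_prod _ _) ?_
    calc (∑ i ∈ S, (X i : MvPolynomial (Fin n) (ZMod 2)).totalDegree)
        = ∑ _i ∈ S, 1 := Finset.sum_congr rfl fun i _ => totalDegree_X i
      _ = S.card := by simp
      _ ≤ D := not_lt.mp hS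

/-- Carlet's bound (coefficient form): composing with a bijection whose inverse has
low degree kills high-weight ANF coefficients. -/
lemma carlet_coef_zero {n d k D : ℕ}
    (F Finv : V n → V n) (hbij : Function.Bijective F)
    (hli : Function.LeftInverse Finv F)
    (hFinv : VecHasAlgDegLE Finv k)
    (g : V n → ZMod 2) (hg : HasAlgDegLE g d)
    (hcond : d + (n - (D + 1)) * k < n)
    (S : Finset (Fin n)) (hS : D < S.card) :
    anfCoef (fun x => g (F x)) S = 0 := by
  obtain ⟨P, hPdeg, hPeval⟩ := hg
  choose Q hQdeg hQeval using hFinv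
  set R : MvPolynomial (Fin n) (ZMod 2) := P * ∏ i ∈ Sᶜ, (1 + Q i) with hR
  have hRdeg : R.totalDegree < n := by
    have h1 : (∏ i ∈ Sᶜ, (1 + Q i : MvPolynomial (Fin n) (ZMod 2))).totalDegree
        ≤ Sᶜ.card * k := by
      refine le_trans (totalDegree_finset_prod _ _) ?_
      calc (∑ i ∈ Sᶜ, (1 + Q i : MvPolynomial (Fin n) (ZMod 2)).totalDegree)
          ≤ ∑ _i ∈ Sᶜ, k := by
            refine Finset.sum_le_sum fun i _ => ?_
            refine le_trans (totalDegree_add _ _) ?_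
            simp only [totalDegree_one, max_le_iff]
            exact ⟨Nat.zero_le _, hQdeg i⟩
        _ = Sᶜ.card * k := by rw [Finset.sum_const, smul_eq_mul]
    have hcard : Sᶜ.card ≤ n - (D + 1) := by
      have h3 : Sᶜ.card = n - S.card := by
        rw [Finset.card_compl, Fintype.card_fin]
      have h4 : S.card ≤ n := le_trans (Finset.card_le_card (Finset.subset_univ S))
        (by rw [Finset.card_univ, Fintype.card_fin])
      omega
    calc R.totalDegree ≤ P.totalDegree + _ := totalDegree_mul _ _
      _ ≤ d + Sᶜ.card * k := Nat.add_le_add hPdeg h1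
      _ ≤ d + (n - (D + 1)) * k := Nat.add_le_add_left (Nat.mul_le_mul_right _ hcard) _
      _ < n := hcond
  have key : ∑ y : V n, MvPolynomial.eval y R = 0 := sum_eval_eq_zero _ hRdeg
  rw [anfCoef, ← key, ← Function.Bijective.sum_comp hbij (fun y => MvPolynomial.eval y R)]
  refine Finset.sum_congr rfl fun x _ => ?_
  rw [hR, map_mul, hPeval, map_prod]
  congr 1
  refine Finset.prod_congr rfl fun i _ => ?_
  rw [map_add, map_one, hQeval]
  exact congrArg _ (congrFun (hli x) i).symm

/-- Carlet's bound, vectorial form. -/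
lemma vec_carlet {n d k D : ℕ}
    (Gf F Finv : V n → V n) (hbij : Function.Bijective F)
    (hli : Function.LeftInverse Finv F)
    (hFinv : VecHasAlgDegLE Finv k)
    (hG : VecHasAlgDegLE Gf d)
    (hcond : d + (n - (D + 1)) * k < n) :
    VecHasAlgDegLE (Gf ∘ F) D := fun j =>
  hasAlgDegLE_of_coef _
    (carlet_coef_zero F Finv hbij hli hFinv (fun x => Gf x j) (hG j) hcond)

lemma hasAlgDegLE_comp {n m a b : ℕ} (g : V m → ZMod 2) (Gf : V n → V m)
    (hg : HasAlgDegLE g a) (hG : VecHasAlgDegLE Gf b) :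
    HasAlgDegLE (fun x => g (Gf x)) (a * b) := by
  obtain ⟨P, hPdeg, hPev⟩ := hg
  choose Q hQdeg hQev using hG
  refine ⟨bind₁ Q P, ?_, ?_⟩
  · have hrw : bind₁ Q P
        = ∑ v ∈ P.support, C (coeff v P) * ∏ i ∈ v.support, (Q i) ^ (v i) := by
      conv_lhs => rw [P.as_sum]
      rw [map_sum]
      exact Finset.sum_congr rfl fun v _ => bind₁_monomial _ _ _
    rw [hrw]
    refine le_trans (totalDegree_finset_sum _ _) (Finset.sup_le fun v hv => ?_)
    refine le_trans (totalDegree_mul _ _) ?_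
    rw [totalDegree_C, zero_add]
    refine le_trans (totalDegree_finset_prod _ _) ?_
    calc (∑ i ∈ v.support, ((Q i) ^ (v i)).totalDegree)
        ≤ ∑ i ∈ v.support, v i * b := by
          refine Finset.sum_le_sum fun i _ => ?_
          exact le_trans (totalDegree_pow _ _) (Nat.mul_le_mul_left _ (hQdeg i))
      _ = (∑ i ∈ v.support, v i) * b := by rw [Finset.sum_mul]
      _ ≤ a * b := by
          refine Nat.mul_le_mul_right _ ?_
          exact le_trans (MvPolynomial.le_totalDegree hv) hPdeg
  · intro x
    have heval : ∀ (y : V m) (p : MvPolynomial (Fin m) (ZMod 2)),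
        MvPolynomial.aeval y p = MvPolynomial.eval y p := fun y p => by
      rw [aeval_def, Algebra.algebraMap_self]; rfl
    have heval' : ∀ (y : V n) (p : MvPolynomial (Fin n) (ZMod 2)),
        MvPolynomial.aeval y p = MvPolynomial.eval y p := fun y p => by
      rw [aeval_def, Algebra.algebraMap_self]; rfl
    have : MvPolynomial.eval x (bind₁ Q P)
        = MvPolynomial.eval (fun i => MvPolynomial.eval x (Q i)) P := by
      rw [← heval', aeval_bind₁]
      simp only [heval', heval]
    rw [this]
    have hGx : (fun i => MvPolynomial.eval x (Q i)) = Gf x := funext fun i => hQev i x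
    rw [hGx, hPev]

lemma vecHasAlgDegLE_comp {n m p a b : ℕ} (Ff : V m → V p) (Gf : V n → V m)
    (hF : VecHasAlgDegLE Ff a) (hG : VecHasAlgDegLE Gf b) :
    VecHasAlgDegLE (Ff ∘ Gf) (a * b) := fun j =>
  hasAlgDegLE_comp (fun y => Ff y j) Gf (hF j) hG

lemma vec_mono {n m d d' : ℕ} (Ff : V n → V m) (h : VecHasAlgDegLE Ff d) (hd : d ≤ d') :
    VecHasAlgDegLE Ff d' := fun j => by
  obtain ⟨P, h1, h2⟩ := h j
  exact ⟨P, le_trans h1 hd, h2⟩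

end NineRoundAux

/-- The 9-round degree bound for Branch1/Branch2 of Gleeok-128: nine bijective rounds,
each of degree at most 2 whose inverse has degree at most 3, compose to a map of
algebraic degree at most 125. -/
theorem nine_round_degree_bound
    (F G : Fin 9 → ((Fin 128 → ZMod 2) → (Fin 128 → ZMod 2)))
    (hbij : ∀ i, Function.Bijective (F i))
    (hleft : ∀ i, Function.LeftInverse (G i) (F i))
    (hright : ∀ i, Function.RightInverse (G i) (F i))
    (hF : ∀ i, VecHasAlgDegLE (F i) 2)
    (hG : ∀ i, VecHasAlgDegLE (G i) 3) :
    VecHasAlgDegLE (F 8 ∘ F 7 ∘ F 6 ∘ F 5 ∘ F 4 ∘ F 3 ∘ F 2 ∘ F 1 ∘ F 0) 125 := by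
  open NineRoundAux in
  have h87 : VecHasAlgDegLE (F 8 ∘ F 7) (2 * 2) :=
    NineRoundAux.vecHasAlgDegLE_comp _ _ (hF 8) (hF 7)
  have h86 : VecHasAlgDegLE ((F 8 ∘ F 7) ∘ F 6) (2 * 2 * 2) :=
    NineRoundAux.vecHasAlgDegLE_comp _ _ h87 (hF 6)
  have h85 : VecHasAlgDegLE (((F 8 ∘ F 7) ∘ F 6) ∘ F 5) (2 * 2 * 2 * 2) :=
    NineRoundAux.vecHasAlgDegLE_comp _ _ h86 (hF 5)
  have h84 : VecHasAlgDegLE ((((F 8 ∘ F 7) ∘ F 6) ∘ F 5) ∘ F 4) (2 * 2 * 2 * 2 * 2) :=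
    NineRoundAux.vecHasAlgDegLE_comp _ _ h85 (hF 4)
  have h83 : VecHasAlgDegLE (((((F 8 ∘ F 7) ∘ F 6) ∘ F 5) ∘ F 4) ∘ F 3)
      (2 * 2 * 2 * 2 * 2 * 2) :=
    NineRoundAux.vecHasAlgDegLE_comp _ _ h84 (hF 3)
  have h83' : VecHasAlgDegLE (((((F 8 ∘ F 7) ∘ F 6) ∘ F 5) ∘ F 4) ∘ F 3) 64 :=
    NineRoundAux.vec_mono _ h83 (by norm_num)
  have h82 : VecHasAlgDegLE ((((((F 8 ∘ F 7) ∘ F 6) ∘ F 5) ∘ F 4) ∘ F 3) ∘ F 2) 106 :=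
    NineRoundAux.vec_carlet _ (F 2) (G 2) (hbij 2) (hleft 2) (hG 2) h83' (by norm_num)
  have h81 : VecHasAlgDegLE (((((((F 8 ∘ F 7) ∘ F 6) ∘ F 5) ∘ F 4) ∘ F 3) ∘ F 2) ∘ F 1) 120 :=
    NineRoundAux.vec_carlet _ (F 1) (G 1) (hbij 1) (hleft 1) (hG 1) h82 (by norm_num)
  have h80 : VecHasAlgDegLE ((((((((F 8 ∘ F 7) ∘ F 6) ∘ F 5) ∘ F 4) ∘ F 3) ∘ F 2) ∘ F 1) ∘ F 0)
      125 :=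
    NineRoundAux.vec_carlet _ (F 0) (G 0) (hbij 0) (hleft 0) (hG 0) h81 (by norm_num)
  exact h80
end

section
/- Let F₁, …, F₉ be bijections of 𝔽₂¹²⁸ such that each Fᵢ has algebraic degree at most 2 and each inverse Fᵢ⁻¹ has algebraic degree at most 3, and set E = F₉ ∘ ⋯ ∘ F₁. Then for every set I of 126 coordinates and every c : Fin 128 → ZMod 2, the sum over all x in the coordinate-affine set V(I,c) of the vector E(x) equals the zero vector of 𝔽₂¹²⁸. -/
open MvPolynomial Finset

lemma zmod2_add_self (a : ZMod 2) : a + a = 0 := by revert a; decide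
lemma zmod2_cases (a : ZMod 2) : a = 0 ∨ a = 1 := by revert a; decide
lemma eq01 : ∀ a b : ZMod 2, (a = 1 ↔ b = 1) → a = b := by decide

/-- Sum of a monomial missing a variable over the full cube is 0 (char 2 pairing). -/
lemma sum_monomial_eval {σ : Type*} [Fintype σ] [DecidableEq σ] (m : σ →₀ ℕ) (i₀ : σ)
    (h0 : m i₀ = 0) (a : ZMod 2) :
    ∑ x : σ → ZMod 2, a * ∏ i, x i ^ m i = 0 := by
  apply Finset.sum_ninvolution (g := fun x => Function.update x i₀ (x i₀ + 1))
  · intro x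
    have : ∏ i, (Function.update x i₀ (x i₀ + 1)) i ^ m i = ∏ i, x i ^ m i := by
      apply Finset.prod_congr rfl
      intro j _
      by_cases hj : j = i₀
      · subst hj; rw [h0, pow_zero, pow_zero]
      · rw [Function.update_of_ne hj]
    rw [this, zmod2_add_self]
  · intro x _ h
    have := congrFun h i₀
    rw [Function.update_self] at this
    rcases zmod2_cases (x i₀) with h' | h' <;> simp [h'] at this
  · intro x; exact Finset.mem_univ _
  · intro x
    funext j
    by_cases hj : j = i₀
    · subst hj; simp [Function.update_self, add_assoc, zmod2_add_self]
    · simp [Function.update_of_ne hj]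

/-- Sum of a polynomial of degree less than the number of variables over the full cube is 0. -/
lemma sum_eval_eq_zero {σ : Type*} [Fintype σ] [DecidableEq σ]
    (P : MvPolynomial σ (ZMod 2)) (h : P.totalDegree < Fintype.card σ) :
    ∑ x : σ → ZMod 2, MvPolynomial.eval x P = 0 := by
  have heval : ∀ x : σ → ZMod 2, eval x P = ∑ m ∈ P.support, coeff m P * ∏ i, x i ^ m i := by
    intro x; rw [eval_eq']
  simp_rw [heval]
  rw [Finset.sum_comm]
  apply Finset.sum_eq_zero
  intro m hm
  have hsupp : m.support ≠ Finset.univ := by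
    intro hcontra
    have h1 : (Fintype.card σ) ≤ m.support.card := by rw [hcontra, Finset.card_univ]
    have h2 : m.support.card ≤ m.sum fun _ e => e := by
      classical
      calc m.support.card = ∑ i ∈ m.support, 1 := by rw [Finset.card_eq_sum_ones]
        _ ≤ ∑ i ∈ m.support, m i :=
          Finset.sum_le_sum (fun i hi =>
            Finsupp.mem_support_iff.mp hi |> Nat.one_le_iff_ne_zero.mpr)
        _ = m.sum fun _ e => e := rfl
    have h3 : (m.sum fun _ e => e) ≤ P.totalDegree := le_totalDegree hm
    omega
  obtain ⟨i₀, hi₀⟩ : ∃ i₀, i₀ ∉ m.support := by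
    by_contra hc
    push_neg at hc
    exact hsupp (Finset.eq_univ_iff_forall.mpr hc)
  exact sum_monomial_eval m i₀ (Finsupp.notMem_support_iff.mp hi₀) _

/-- Degree bound for substitution of polynomials of degree ≤ e. -/
lemma totalDegree_eval₂_le {σ τ : Type*} (g : σ → MvPolynomial τ (ZMod 2)) (e : ℕ)
    (hg : ∀ i, (g i).totalDegree ≤ e) (P : MvPolynomial σ (ZMod 2)) :
    (eval₂ C g P).totalDegree ≤ P.totalDegree * e := by
  rw [eval₂_eq]
  apply (totalDegree_finset_sum _ _).trans
  apply Finset.sup_le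
  intro m hm
  calc (C (coeff m P) * ∏ i ∈ m.support, g i ^ m i).totalDegree
      ≤ (C (coeff m P)).totalDegree + (∏ i ∈ m.support, g i ^ m i).totalDegree :=
        totalDegree_mul _ _
    _ ≤ 0 + ∑ i ∈ m.support, (g i ^ m i).totalDegree := by
        rw [totalDegree_C]; exact Nat.add_le_add le_rfl (totalDegree_finset_prod _ _)
    _ ≤ ∑ i ∈ m.support, m i * e := by
        rw [zero_add]
        exact Finset.sum_le_sum fun i _ =>
          (totalDegree_pow _ _).trans (Nat.mul_le_mul le_rfl (hg i))
    _ = (∑ i ∈ m.support, m i) * e := by rw [Finset.sum_mul]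
    _ ≤ P.totalDegree * e := Nat.mul_le_mul_right e (le_totalDegree hm)

lemma eval_eval₂_C {σ τ : Type*} (g : σ → MvPolynomial τ (ZMod 2))
    (P : MvPolynomial σ (ZMod 2)) (y : τ → ZMod 2) :
    eval y (eval₂ C g P) = eval (fun i => eval y (g i)) P := by
  rw [← eval_assoc]; rfl

/-- A function of algebraic degree ≤ d sums to zero over any coordinate-affine set
with more than d free coordinates. -/
lemma sum_slice_eq_zero {n d : ℕ} {f : (Fin n → ZMod 2) → ZMod 2} (hf : HasAlgDegLE f d)
    (I : Finset (Fin n)) (hd : d < I.card) (c : Fin n → ZMod 2) :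
    ∑ x ∈ Finset.univ.filter (fun x : Fin n → ZMod 2 => ∀ i ∉ I, x i = c i), f x = 0 := by
  classical
  obtain ⟨P, hPd, hPe⟩ := hf
  set g : Fin n → MvPolynomial ↥I (ZMod 2) :=
    fun i => if h : i ∈ I then X ⟨i, h⟩ else C (c i) with hg
  set Q : MvPolynomial ↥I (ZMod 2) := eval₂ C g P with hQ
  have hQd : Q.totalDegree < Fintype.card ↥I := by
    have h1 : Q.totalDegree ≤ P.totalDegree * 1 := by
      apply totalDegree_eval₂_le
      intro i
      by_cases h : i ∈ I
      · simp [hg, h, totalDegree_X]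
      · simp [hg, h, totalDegree_C]
    rw [mul_one] at h1
    rw [Fintype.card_coe]
    omega
  have hzero := sum_eval_eq_zero Q hQd
  set φ : (↥I → ZMod 2) → (Fin n → ZMod 2) :=
    fun y i => if h : i ∈ I then y ⟨i, h⟩ else c i with hφ
  have key : ∀ y : ↥I → ZMod 2, eval y Q = f (φ y) := by
    intro y
    rw [hQ, eval_eval₂_C, ← hPe]
    have : (fun i => eval y (g i)) = φ y := by
      funext i
      by_cases h : i ∈ I <;> simp [hg, hφ, h]
    rw [this]
  rw [← hzero]
  symm
  apply Finset.sum_nbij' (i := fun y => φ y) (j := fun x => fun i : ↥I => x i)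
  · intro y _
    simp only [Finset.mem_filter, Finset.mem_univ, true_and]
    intro i hi
    simp [hφ, hi]
  · intro x _; exact Finset.mem_univ _
  · intro y _
    funext i
    simp [hφ]
  · intro x hx
    simp only [Finset.mem_filter, Finset.mem_univ, true_and] at hx
    funext i
    by_cases h : i ∈ I <;> simp [hφ, h, hx i]
  · intro y _
    exact key y

/-- If all cube sums over coordinate subsets of size > d vanish, then f has degree ≤ d
(Möbius inversion / ANF coefficients). -/
lemma hasAlgDegLE_of_cube_sums {n d : ℕ} (f : (Fin n → ZMod 2) → ZMod 2)
    (h : ∀ S : Finset (Fin n), d < S.card →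
      ∑ x ∈ Finset.univ.filter (fun x : Fin n → ZMod 2 => ∀ i ∉ S, x i = 0), f x = 0) :
    HasAlgDegLE f d := by
  classical
  set w : Finset (Fin n) → ZMod 2 :=
    fun S => ∑ x ∈ Finset.univ.filter (fun x : Fin n → ZMod 2 => ∀ i ∉ S, x i = 0), f x with hw
  have hw0 : ∀ S : Finset (Fin n), d < S.card → w S = 0 := h
  refine ⟨∑ S : Finset (Fin n), C (w S) * ∏ i ∈ S, X i, ?_, ?_⟩
  · apply (totalDegree_finset_sum _ _).trans
    apply Finset.sup_le
    intro S _
    by_cases hS : d < S.card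
    · rw [hw0 S hS]
      simp
    · calc (C (w S) * ∏ i ∈ S, X i).totalDegree
          ≤ (C (w S)).totalDegree + (∏ i ∈ S, (X i : MvPolynomial (Fin n) (ZMod 2))).totalDegree :=
            totalDegree_mul _ _
        _ ≤ 0 + ∑ i ∈ S, (X i : MvPolynomial (Fin n) (ZMod 2)).totalDegree := by
            rw [totalDegree_C]; exact Nat.add_le_add le_rfl (totalDegree_finset_prod _ _)
        _ = S.card := by simp [totalDegree_X]
        _ ≤ d := le_of_not_gt hS
  · intro x
    set T : Finset (Fin n) := Finset.univ.filter (fun i => x i = 1) with hT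
    have hxT : ∀ i, x i = 1 ↔ i ∈ T := by intro i; simp [hT]
    have hxT0 : ∀ i, x i = 0 ↔ i ∉ T := by
      intro i
      simp only [hT, Finset.mem_filter, Finset.mem_univ, true_and]
      rcases zmod2_cases (x i) with h' | h' <;> simp [h']
    rw [map_sum]
    have step1 : ∀ S : Finset (Fin n),
        eval x (C (w S) * ∏ i ∈ S, X i) = if S ⊆ T then w S else 0 := by
      intro S
      rw [eval_mul, eval_C, eval_prod]
      simp only [eval_X]
      by_cases hS : S ⊆ T
      · rw [if_pos hS, Finset.prod_eq_one fun i hi => (hxT i).mpr (hS hi), mul_one]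
      · rw [if_neg hS]
        obtain ⟨i, hiS, hiT⟩ := Finset.not_subset.mp hS
        rw [Finset.prod_eq_zero hiS ((hxT0 i).mpr hiT), mul_zero]
    simp_rw [step1]
    rw [← Finset.sum_filter]
    have hfilt : Finset.univ.filter (fun S : Finset (Fin n) => S ⊆ T) = T.powerset := by
      ext S; simp [Finset.mem_powerset]
    rw [hfilt]
    have hwS : ∀ S : Finset (Fin n),
        w S = ∑ y : Fin n → ZMod 2, if (∀ i ∉ S, y i = 0) then f y else 0 := by
      intro S; rw [hw, ← Finset.sum_filter]
    simp_rw [hwS]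
    rw [Finset.sum_comm]
    have hterm : ∀ y : Fin n → ZMod 2,
        (∑ S ∈ T.powerset, if (∀ i ∉ S, y i = 0) then f y else 0)
          = if y = x then f x else 0 := by
      intro y
      set Ty : Finset (Fin n) := Finset.univ.filter (fun i => y i = 1) with hTy
      have hyT : ∀ i, y i = 1 ↔ i ∈ Ty := by intro i; simp [hTy]
      have hcond : ∀ S : Finset (Fin n), (∀ i ∉ S, y i = 0) ↔ Ty ⊆ S := by
        intro S
        constructor
        · intro hy i hi
          by_contra hiS
          have h1 : y i = 1 := (hyT i).mpr hi
          rw [hy i hiS] at h1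
          exact (by decide : (0 : ZMod 2) ≠ 1) h1
        · intro hs i hiS
          rcases zmod2_cases (y i) with h' | h'
          · exact h'
          · exact absurd (hs ((hyT i).mp h')) hiS
      have hrw : (∑ S ∈ T.powerset, if (∀ i ∉ S, y i = 0) then f y else 0)
          = ∑ S ∈ T.powerset.filter (fun S => Ty ⊆ S), f y := by
        rw [Finset.sum_filter]
        exact Finset.sum_congr rfl fun S _ => if_congr (hcond S) rfl rfl
      rw [hrw]
      have hIcc : T.powerset.filter (fun S => Ty ⊆ S) = Finset.Icc Ty T := by
        ext S
        simp [Finset.mem_Icc, Finset.mem_powerset, Finset.le_iff_subset, and_comm]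
      rw [hIcc, Finset.sum_const]
      have hyx : Ty = T → y = x := by
        intro hTT
        funext i
        exact eq01 _ _ (by rw [hyT i, hTT, ← hxT i])
      by_cases hyx' : y = x
      · rw [if_pos hyx']
        have : Ty = T := by subst hyx'; rw [hTy, hT]
        rw [this, Finset.Icc_self, Finset.card_singleton, one_smul, hyx']
      · rw [if_neg hyx']
        by_cases hsub : Ty ⊆ T
        · have hne : Ty ≠ T := fun hTT => hyx' (hyx hTT)
          have hcard : Ty.card < T.card := Finset.card_lt_card (ssubset_of_ne_of_subset hne hsub)
          rw [Finset.card_Icc_finset hsub]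
          have hk : T.card - Ty.card ≠ 0 := by omega
          rw [nsmul_eq_mul]
          have : ((2 ^ (T.card - Ty.card) : ℕ) : ZMod 2) = 0 := by
            rw [Nat.cast_pow]
            norm_num
            exact ⟨by decide, hk⟩
          rw [this, zero_mul]
        · have : Finset.Icc Ty T = ∅ :=
            Finset.Icc_eq_empty (by rw [Finset.le_iff_subset]; exact hsub)
          rw [this, Finset.card_empty, zero_smul]
    simp_rw [hterm]
    rw [Finset.sum_ite_eq' Finset.univ x (fun _ => f x)]
    simp

/-- Composition with a vectorial function multiplies algebraic degrees. -/
lemma comp_degLE {n m dg e : ℕ} {g : (Fin m → ZMod 2) → ZMod 2}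
    {F : (Fin n → ZMod 2) → (Fin m → ZMod 2)}
    (hg : HasAlgDegLE g dg) (hF : VecHasAlgDegLE F e) :
    HasAlgDegLE (fun x => g (F x)) (dg * e) := by
  obtain ⟨Pg, hPgd, hPge⟩ := hg
  choose Pv hPvd hPve using hF
  refine ⟨eval₂ C Pv Pg, ?_, ?_⟩
  · exact (totalDegree_eval₂_le Pv e hPvd Pg).trans (Nat.mul_le_mul_right e hPgd)
  · intro x
    rw [eval_eval₂_C]
    have : (fun j => eval x (Pv j)) = F x := funext fun j => hPve j x
    rw [this, hPge]

/-- The Boura–Canteaut degree bound: composing with a bijection whose inverse has low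
degree keeps the degree below n. -/
lemma BC_step {n dg e d' : ℕ} {g : (Fin n → ZMod 2) → ZMod 2}
    {F Finv : (Fin n → ZMod 2) → (Fin n → ZMod 2)}
    (hg : HasAlgDegLE g dg) (hFinv : VecHasAlgDegLE Finv e)
    (hli : Function.LeftInverse Finv F) (hri : Function.RightInverse Finv F)
    (hd : dg + (n - (d' + 1)) * e < n) :
    HasAlgDegLE (fun x => g (F x)) d' := by
  classical
  apply hasAlgDegLE_of_cube_sums
  intro S hS
  obtain ⟨Pg, hPgd, hPge⟩ := hg
  choose Pv hPvd hPve using hFinv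
  set R : MvPolynomial (Fin n) (ZMod 2) := Pg * ∏ i ∈ Sᶜ, (1 + Pv i) with hR
  have hRd : R.totalDegree < Fintype.card (Fin n) := by
    have h1 : R.totalDegree ≤ dg + ∑ i ∈ Sᶜ, e := by
      apply (totalDegree_mul _ _).trans
      apply Nat.add_le_add hPgd
      apply (totalDegree_finset_prod _ _).trans
      apply Finset.sum_le_sum
      intro i _
      apply (totalDegree_add _ _).trans
      rw [totalDegree_one]
      exact max_le (Nat.zero_le _) (hPvd i)
    have h2 : ∑ i ∈ Sᶜ, e = (n - S.card) * e := by
      rw [Finset.sum_const, smul_eq_mul, Finset.card_compl, Fintype.card_fin]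
    have h3 : n - S.card ≤ n - (d' + 1) := Nat.sub_le_sub_left hS (n)
    rw [Fintype.card_fin]
    calc R.totalDegree ≤ dg + (n - S.card) * e := by rw [← h2]; exact h1
      _ ≤ dg + (n - (d' + 1)) * e := Nat.add_le_add le_rfl (Nat.mul_le_mul_right e h3)
      _ < n := hd
  have hzero := sum_eval_eq_zero R hRd
  have hReval : ∀ y : Fin n → ZMod 2,
      eval y R = g y * ∏ i ∈ Sᶜ, (1 + Finv y i) := by
    intro y
    rw [hR, eval_mul, eval_prod, hPge]
    congr 1
    apply Finset.prod_congr rfl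
    intro i _
    rw [map_add, map_one, hPve]
  -- transform the cube sum into the full-space sum of eval R
  have key : ∑ x ∈ Finset.univ.filter (fun x : Fin n → ZMod 2 => ∀ i ∉ S, x i = 0), g (F x)
      = ∑ y : Fin n → ZMod 2, eval y R := by
    have step1 : ∑ x ∈ Finset.univ.filter (fun x : Fin n → ZMod 2 => ∀ i ∉ S, x i = 0), g (F x)
        = ∑ x ∈ Finset.univ.filter (fun x : Fin n → ZMod 2 => ∀ i ∉ S, x i = 0),
            g (F x) * ∏ i ∈ Sᶜ, (1 + x i) := by
      apply Finset.sum_congr rfl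
      intro x hx
      simp only [Finset.mem_filter, Finset.mem_univ, true_and] at hx
      rw [Finset.prod_eq_one, mul_one]
      intro i hi
      rw [hx i (Finset.mem_compl.mp hi), add_zero]
    have step2 : ∑ x ∈ Finset.univ.filter (fun x : Fin n → ZMod 2 => ∀ i ∉ S, x i = 0),
            g (F x) * ∏ i ∈ Sᶜ, (1 + x i)
        = ∑ x : Fin n → ZMod 2, g (F x) * ∏ i ∈ Sᶜ, (1 + x i) := by
      symm
      apply (Finset.sum_subset (Finset.filter_subset _ _) _).symm
      intro x _ hx
      simp only [Finset.mem_filter, Finset.mem_univ, true_and] at hx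
      push_neg at hx
      obtain ⟨i, hiS, hxi⟩ := hx
      have hxi1 : x i = 1 := (zmod2_cases (x i)).resolve_left hxi
      rw [Finset.prod_eq_zero (Finset.mem_compl.mpr hiS), mul_zero]
      rw [hxi1]
      decide
    have step3 : ∑ x : Fin n → ZMod 2, g (F x) * ∏ i ∈ Sᶜ, (1 + x i)
        = ∑ x : Fin n → ZMod 2, eval (F x) R := by
      apply Finset.sum_congr rfl
      intro x _
      rw [hReval (F x)]
      congr 1
      apply Finset.prod_congr rfl
      intro i _
      rw [hli x]
    have hFbij : Function.Bijective F := ⟨hli.injective, hri.surjective⟩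
    rw [step1, step2, step3, Function.Bijective.sum_comp hFbij (fun y => eval y R)]
  rw [key, hzero]

/-- The 9-round integral distinguisher for Branch1/Branch2 of Gleeok-128 with data
complexity `2^126`: nine bijective rounds, each of degree at most 2 whose inverse has
degree at most 3, yield a map of degree at most `125 < 126`, so over any
coordinate-affine set with 126 active bits all output bits are balanced. -/
theorem nine_round_integral_distinguisher
    (F G : Fin 9 → ((Fin 128 → ZMod 2) → (Fin 128 → ZMod 2)))
    (hbij : ∀ i, Function.Bijective (F i))
    (hleft : ∀ i, Function.LeftInverse (G i) (F i))
    (hright : ∀ i, Function.RightInverse (G i) (F i))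
    (hF : ∀ i, VecHasAlgDegLE (F i) 2)
    (hG : ∀ i, VecHasAlgDegLE (G i) 3)
    (I : Finset (Fin 128)) (hI : I.card = 126) (c : Fin 128 → ZMod 2) :
    ∑ x ∈ Finset.univ.filter (fun x : Fin 128 → ZMod 2 => ∀ i ∉ I, x i = c i),
      (F 8 ∘ F 7 ∘ F 6 ∘ F 5 ∘ F 4 ∘ F 3 ∘ F 2 ∘ F 1 ∘ F 0) x = 0 := by
  have hdeg : ∀ j : Fin 128,
      HasAlgDegLE (fun x => (F 8 ∘ F 7 ∘ F 6 ∘ F 5 ∘ F 4 ∘ F 3 ∘ F 2 ∘ F 1 ∘ F 0) x j) 125 := by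
    intro j
    have h1 : HasAlgDegLE (fun x => F 8 x j) 2 := hF 8 j
    have h2 : HasAlgDegLE (fun x => F 8 (F 7 x) j) (2 * 2) := comp_degLE h1 (hF 7)
    have h3 : HasAlgDegLE (fun x => F 8 (F 7 (F 6 x)) j) (2 * 2 * 2) := comp_degLE h2 (hF 6)
    have h4 : HasAlgDegLE (fun x => F 8 (F 7 (F 6 (F 5 x))) j) (2 * 2 * 2 * 2) :=
      comp_degLE h3 (hF 5)
    have h5 : HasAlgDegLE (fun x => F 8 (F 7 (F 6 (F 5 (F 4 x)))) j) (2 * 2 * 2 * 2 * 2) :=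
      comp_degLE h4 (hF 4)
    have h6 : HasAlgDegLE (fun x => F 8 (F 7 (F 6 (F 5 (F 4 (F 3 x))))) j)
        (2 * 2 * 2 * 2 * 2 * 2) := comp_degLE h5 (hF 3)
    have h7 : HasAlgDegLE (fun x => F 8 (F 7 (F 6 (F 5 (F 4 (F 3 (F 2 x)))))) j) 106 :=
      BC_step h6 (hG 2) (hleft 2) (hright 2) (by norm_num)
    have h8 : HasAlgDegLE (fun x => F 8 (F 7 (F 6 (F 5 (F 4 (F 3 (F 2 (F 1 x))))))) j) 120 :=
      BC_step h7 (hG 1) (hleft 1) (hright 1) (by norm_num)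
    have h9 : HasAlgDegLE
        (fun x => F 8 (F 7 (F 6 (F 5 (F 4 (F 3 (F 2 (F 1 (F 0 x)))))))) j) 125 :=
      BC_step h8 (hG 0) (hleft 0) (hright 0) (by norm_num)
    exact h9
  funext j
  rw [Finset.sum_apply]
  have := sum_slice_eq_zero (hdeg j) I (by omega) c
  simpa using this
end

section
/- Let F₁, …, F₅ be bijections of 𝔽₂¹²⁸ such that each Fᵢ has algebraic degree at most 3 and each inverse Fᵢ⁻¹ has algebraic degree at most 3, and set E = F₅ ∘ ⋯ ∘ F₁. Then E has algebraic degree at most 112, and for every set I of 113 coordinates and every c : Fin 128 → ZMod 2, the sum over all x in the coordinate-affine set V(I,c) of the vector E(x) equals the zero vector of 𝔽₂¹²⁸. -/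
/-! Degrees multiply under composition, so the last four rounds have degree at most
`3⁴ = 81`. The sum of a function of degree `< n` over all of `𝔽₂ⁿ` vanishes, and the ANF
coefficient of `f` at `∏ i ∈ u, X i` is the sum of `f` over `V(u, 0)`. For `f = Q ∘ F₁`,
substituting `y = F₁ x` turns that coefficient into the sum over all `y` of `Q y` times the
indicator of `V(u, 0)` at `F₁⁻¹ y`, of degree at most `81 + 3 (128 - |u|) < 128` once
`|u| ≥ 113` (Carlet's bound). So the five rounds have degree at most `112`, and a function
of degree `< |I|` sums to zero over `V(I, c)`, since the indicator of `V(I, c)` has degree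
`128 - |I|`. -/

open Finset MvPolynomial

namespace ZMod

lemma one_add_add_eq_ite (a b : ZMod 2) : 1 + a + b = if a = b then 1 else 0 := by
  revert a b; decide

lemma eq_ite_ne_zero (a : ZMod 2) : a = if a ≠ 0 then 1 else 0 := by
  revert a; decide

lemma eq_of_ne_zero_iff {a b : ZMod 2} : (a ≠ 0 ↔ b ≠ 0) → a = b := by
  revert a b; decide

end ZMod

lemma Finset.card_Icc_finset_cast_zmod_two {ι : Type*} [DecidableEq ι] {s t : Finset ι}
    (h : s ⊆ t) : ((Icc s t).card : ZMod 2) = if s = t then 1 else 0 := by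
  rw [card_Icc_finset h]
  split_ifs with hst
  · simp [hst]
  · have hlt : s.card < t.card := card_lt_card (ssubset_iff_subset_ne.2 ⟨h, hst⟩)
    rw [Nat.cast_pow, Nat.cast_ofNat, show (2 : ZMod 2) = 0 from rfl, zero_pow (by omega)]

lemma MvPolynomial.totalDegree_bind₁_le {σ τ R : Type*} [CommSemiring R]
    (f : σ → MvPolynomial τ R) (p : MvPolynomial σ R) {e : ℕ}
    (hf : ∀ i, (f i).totalDegree ≤ e) : (bind₁ f p).totalDegree ≤ p.totalDegree * e := by
  conv_lhs => rw [p.as_sum]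
  rw [map_sum]
  refine totalDegree_finsetSum_le fun s hs => ?_
  rw [bind₁_monomial]
  calc (C (p.coeff s) * ∏ i ∈ s.support, f i ^ s i).totalDegree
      ≤ ∑ i ∈ s.support, (f i ^ s i).totalDegree := (totalDegree_mul _ _).trans <| by
        rw [totalDegree_C, zero_add]; exact totalDegree_finsetProd _ _
    _ ≤ ∑ i ∈ s.support, s i * e :=
        sum_le_sum fun i _ => (totalDegree_pow _ _).trans (Nat.mul_le_mul_left _ (hf i))
    _ = (s.sum fun _ k => k) * e := by rw [Finsupp.sum, sum_mul]
    _ ≤ p.totalDegree * e := Nat.mul_le_mul_right e (le_totalDegree hs)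

variable {n m : ℕ}

/-- The paper's `V(I, c)`. -/
def coordAffineSet (I : Finset (Fin n)) (c : Fin n → ZMod 2) : Finset (Fin n → ZMod 2) :=
  univ.filter fun x => ∀ i ∉ I, x i = c i

def anfCoeff (f : (Fin n → ZMod 2) → ZMod 2) (u : Finset (Fin n)) : ZMod 2 :=
  ∑ x ∈ coordAffineSet u 0, f x

namespace HasAlgDegLE

variable {f g : (Fin n → ZMod 2) → ZMod 2} {d e : ℕ}

lemma mul (hf : HasAlgDegLE f d) (hg : HasAlgDegLE g e) :
    HasAlgDegLE (fun x => f x * g x) (d + e) := by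
  obtain ⟨P, hP, hPf⟩ := hf
  obtain ⟨Q, hQ, hQg⟩ := hg
  exact ⟨P * Q, (totalDegree_mul P Q).trans (add_le_add hP hQ), fun x => by simp [hPf, hQg]⟩

lemma comp {G : (Fin m → ZMod 2) → (Fin n → ZMod 2)} (hf : HasAlgDegLE f d)
    (hG : VecHasAlgDegLE G e) : HasAlgDegLE (f ∘ G) (d * e) := by
  obtain ⟨P, hP, hPf⟩ := hf
  choose Q hQ hQG using hG
  refine ⟨bind₁ Q P, (totalDegree_bind₁_le Q P hQ).trans (Nat.mul_le_mul_right e hP),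
    fun x => ?_⟩
  rw [Function.comp_apply, ← hPf, eval, eval₂Hom_bind₁]
  exact congrArg (eval · P) (funext fun j => hQG j x)

lemma sum_eq_zero (hf : HasAlgDegLE f d) (h : d < n) : ∑ x, f x = 0 := by
  obtain ⟨P, hP, hPf⟩ := hf
  simp_rw [← hPf]
  exact P.sum_eval_eq_zero (by simpa using hP.trans_lt h)

end HasAlgDegLE

lemma sum_coordAffineSet_eq_sum_mul_ite (f : (Fin n → ZMod 2) → ZMod 2) (I : Finset (Fin n))
    (c : Fin n → ZMod 2) :
    ∑ x ∈ coordAffineSet I c, f x = ∑ x, f x * if x ∈ coordAffineSet I c then 1 else 0 := by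
  simp_rw [mul_boole, sum_ite_mem, univ_inter]

theorem hasAlgDegLE_ite_mem_coordAffineSet (I : Finset (Fin n)) (c : Fin n → ZMod 2) :
    HasAlgDegLE (fun x => if x ∈ coordAffineSet I c then 1 else 0) (n - I.card) := by
  refine ⟨∏ i ∈ Iᶜ, (1 + X i + C (c i)), ?_, fun x => ?_⟩
  · calc (∏ i ∈ Iᶜ, (1 + X i + C (c i))).totalDegree
        ≤ ∑ i ∈ Iᶜ, (1 + X i + C (c i) : MvPolynomial (Fin n) (ZMod 2)).totalDegree :=
          totalDegree_finsetProd _ _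
      _ ≤ ∑ i ∈ Iᶜ, 1 := sum_le_sum fun i _ => (totalDegree_add _ _).trans <|
          max_le ((totalDegree_add _ _).trans (max_le (by simp) (by simp))) (by simp)
      _ = n - I.card := by simp [card_compl]
  · simp_rw [map_prod, map_add, map_one, eval_X, eval_C, ZMod.one_add_add_eq_ite, prod_boole]
    simp [coordAffineSet]

theorem sum_anfCoeff_mul_prod (f : (Fin n → ZMod 2) → ZMod 2) (x : Fin n → ZMod 2) :
    ∑ u, anfCoeff f u * ∏ i ∈ u, x i = f x := by
  let supp : (Fin n → ZMod 2) → Finset (Fin n) := fun z => univ.filter (z · ≠ 0)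
  have mem_iff (u : Finset (Fin n)) (z) : z ∈ coordAffineSet u 0 ↔ supp z ⊆ u := by
    simp [coordAffineSet, supp, subset_iff, not_imp_comm]
  have prod_eq (u : Finset (Fin n)) : ∏ i ∈ u, x i = if u ⊆ supp x then 1 else 0 := by
    rw [prod_congr rfl fun i _ => ZMod.eq_ite_ne_zero (x i), prod_boole]
    simp [supp, subset_iff]
  have supp_inj {z} (h : supp z = supp x) : z = x :=
    funext fun i => ZMod.eq_of_ne_zero_iff (by simpa [supp] using congr(i ∈ $h))
  -- Each `z` is counted `2 ^ (|supp x| - |supp z|)` times, an odd number only for `z = x`.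
  calc ∑ u, anfCoeff f u * ∏ i ∈ u, x i
      = ∑ u ∈ (supp x).powerset, ∑ z ∈ coordAffineSet u 0, f z := by
        simp_rw [prod_eq, mul_boole, ← sum_filter, anfCoeff]
        congr 1; ext; simp
    _ = ∑ z ∈ coordAffineSet (supp x) 0, ∑ _u ∈ Icc (supp z) (supp x), f z :=
        sum_comm' fun u z => by
          simp only [mem_powerset, mem_iff, mem_Icc]
          exact ⟨fun h => ⟨⟨h.2, h.1⟩, h.2.trans h.1⟩, fun h => ⟨h.1.2, h.1.1⟩⟩
    _ = ∑ z ∈ coordAffineSet (supp x) 0, if supp z = supp x then f z else 0 := by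
        refine sum_congr rfl fun z hz => ?_
        rw [sum_const, nsmul_eq_mul, card_Icc_finset_cast_zmod_two ((mem_iff _ _).1 hz),
          boole_mul]
    _ = f x := by
        rw [sum_eq_single_of_mem x ((mem_iff _ _).2 subset_rfl)
          fun z _ hzx => if_neg (mt supp_inj hzx), if_pos rfl]

theorem hasAlgDegLE_of_anfCoeff_eq_zero {f : (Fin n → ZMod 2) → ZMod 2} {d : ℕ}
    (h : ∀ u : Finset (Fin n), d < u.card → anfCoeff f u = 0) : HasAlgDegLE f d := by
  refine ⟨∑ u ∈ univ.filter (·.card ≤ d), C (anfCoeff f u) * ∏ i ∈ u, X i,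
    totalDegree_finsetSum_le fun u hu => ?_, fun x => ?_⟩
  · calc (C (anfCoeff f u) * ∏ i ∈ u, X i).totalDegree
        ≤ ∑ i ∈ u, (X i : MvPolynomial (Fin n) (ZMod 2)).totalDegree :=
          (totalDegree_mul _ _).trans <| by
            rw [totalDegree_C, zero_add]; exact totalDegree_finsetProd _ _
      _ = u.card := by simp
      _ ≤ d := (mem_filter.1 hu).2
  · rw [← sum_anfCoeff_mul_prod f x, map_sum, sum_filter]
    refine sum_congr rfl fun u _ => ?_
    split_ifs with hu
    · simp
    · rw [h u (by omega), zero_mul]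

namespace HasAlgDegLE

variable {f : (Fin n → ZMod 2) → ZMod 2} {d e : ℕ}

theorem sum_coordAffineSet_eq_zero (hf : HasAlgDegLE f d) {I : Finset (Fin n)}
    (hI : d < I.card) (c : Fin n → ZMod 2) : ∑ x ∈ coordAffineSet I c, f x = 0 := by
  rw [sum_coordAffineSet_eq_sum_mul_ite]
  refine (hf.mul (hasAlgDegLE_ite_mem_coordAffineSet I c)).sum_eq_zero ?_
  have : I.card ≤ n := by simpa using I.card_le_univ
  omega

theorem comp_equiv (hf : HasAlgDegLE f d) (σ : (Fin n → ZMod 2) ≃ (Fin n → ZMod 2))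
    (hσ : VecHasAlgDegLE σ.symm e) {k : ℕ} (hk : d + (n - (k + 1)) * e < n) :
    HasAlgDegLE (f ∘ σ) k := by
  refine hasAlgDegLE_of_anfCoeff_eq_zero fun u hu => ?_
  have hdeg : HasAlgDegLE (fun y => f y * (if σ.symm y ∈ coordAffineSet u 0 then 1 else 0))
      (d + (n - u.card) * e) :=
    hf.mul ((hasAlgDegLE_ite_mem_coordAffineSet u 0).comp hσ)
  calc anfCoeff (f ∘ σ) u
      = ∑ x, f (σ x) * if x ∈ coordAffineSet u 0 then 1 else 0 := by
        rw [anfCoeff, sum_coordAffineSet_eq_sum_mul_ite]; rfl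
    _ = ∑ y, f y * if σ.symm y ∈ coordAffineSet u 0 then 1 else 0 :=
        (σ.symm.sum_comp _).symm.trans (by simp)
    _ = 0 := hdeg.sum_eq_zero <| lt_of_le_of_lt (by gcongr; omega) hk

end HasAlgDegLE

namespace VecHasAlgDegLE

variable {F : (Fin n → ZMod 2) → (Fin m → ZMod 2)} {d e : ℕ}

theorem comp {l : ℕ} {G : (Fin l → ZMod 2) → (Fin n → ZMod 2)} (hF : VecHasAlgDegLE F d)
    (hG : VecHasAlgDegLE G e) : VecHasAlgDegLE (F ∘ G) (d * e) :=
  fun j => (hF j).comp hG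

theorem comp_equiv (hF : VecHasAlgDegLE F d) (σ : (Fin n → ZMod 2) ≃ (Fin n → ZMod 2))
    (hσ : VecHasAlgDegLE σ.symm e) {k : ℕ} (hk : d + (n - (k + 1)) * e < n) :
    VecHasAlgDegLE (F ∘ σ) k :=
  fun j => (hF j).comp_equiv σ hσ hk

theorem sum_coordAffineSet_eq_zero (hF : VecHasAlgDegLE F d) {I : Finset (Fin n)}
    (hI : d < I.card) (c : Fin n → ZMod 2) : ∑ x ∈ coordAffineSet I c, F x = 0 :=
  funext fun j => by simpa using (hF j).sum_coordAffineSet_eq_zero hI c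

end VecHasAlgDegLE

theorem five_round_branch3_integral_distinguisher_general
    (F G : Fin 5 → ((Fin 128 → ZMod 2) → (Fin 128 → ZMod 2)))
    (hleft : ∀ i, Function.LeftInverse (G i) (F i))
    (hright : ∀ i, Function.RightInverse (G i) (F i))
    (hF : ∀ i, VecHasAlgDegLE (F i) 3)
    (hG : ∀ i, VecHasAlgDegLE (G i) 3) :
    VecHasAlgDegLE (F 4 ∘ F 3 ∘ F 2 ∘ F 1 ∘ F 0) 112 ∧
    ∀ (I : Finset (Fin 128)), I.card = 113 → ∀ c : Fin 128 → ZMod 2,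
      ∑ x ∈ Finset.univ.filter (fun x : Fin 128 → ZMod 2 => ∀ i ∉ I, x i = c i),
        (F 4 ∘ F 3 ∘ F 2 ∘ F 1 ∘ F 0) x = 0 := by
  have h81 : VecHasAlgDegLE (F 4 ∘ F 3 ∘ F 2 ∘ F 1) 81 :=
    (hF 4).comp ((hF 3).comp ((hF 2).comp (hF 1)))
  have h112 : VecHasAlgDegLE (F 4 ∘ F 3 ∘ F 2 ∘ F 1 ∘ F 0) 112 :=
    h81.comp_equiv ⟨F 0, G 0, hleft 0, hright 0⟩ (hG 0) (by norm_num)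
  exact ⟨h112, fun I hI c => h112.sum_coordAffineSet_eq_zero (by omega) c⟩

/-- The improved 5-round integral distinguisher for Branch3 of Gleeok-128 with data
complexity `2^113`: five bijective rounds of degree at most 3, with inverses of degree
at most 3, compose to degree at most `112 < 113`, so over any coordinate-affine set
with 113 active bits all output bits are balanced. -/
theorem five_round_branch3_integral_distinguisher
    (F G : Fin 5 → ((Fin 128 → ZMod 2) → (Fin 128 → ZMod 2)))
    (hbij : ∀ i, Function.Bijective (F i))
    (hleft : ∀ i, Function.LeftInverse (G i) (F i))
    (hright : ∀ i, Function.RightInverse (G i) (F i))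
    (hF : ∀ i, VecHasAlgDegLE (F i) 3)
    (hG : ∀ i, VecHasAlgDegLE (G i) 3) :
    VecHasAlgDegLE (F 4 ∘ F 3 ∘ F 2 ∘ F 1 ∘ F 0) 112 ∧
    ∀ (I : Finset (Fin 128)), I.card = 113 → ∀ c : Fin 128 → ZMod 2,
      ∑ x ∈ Finset.univ.filter (fun x : Fin 128 → ZMod 2 => ∀ i ∉ I, x i = c i),
        (F 4 ∘ F 3 ∘ F 2 ∘ F 1 ∘ F 0) x = 0 :=
  five_round_branch3_integral_distinguisher_general F G hleft hright hF hG
end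

section
/- Let k, t₀, t₁, t₂ be natural numbers, let n = 2^k, and define θ : 𝔽₂ⁿ → 𝔽₂ⁿ by (θ x)ᵢ = x_{(i+t₀) mod n} + x_{(i+t₁) mod n} + x_{(i+t₂) mod n} (sum in ZMod 2, indices taken modulo n). Then θ is bijective. -/
/-!
In characteristic 2 the cross terms of a square cancel, so applying a sum of three shifts twice
gives the sum of the three doubled shifts (this is the Frobenius identity
`(X^a + X^b + X^c)^2 = X^{2a} + X^{2b} + X^{2c}` in the group algebra). Iterating `2^k` times on
`ℤ/2^k` therefore gives three times the identity, which is the identity, so `θ` has finite order.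
-/

open Fin.NatCast

theorem Function.bijective_of_iterate_succ_eq_id {α : Type*} {f : α → α} {n : ℕ}
    (h : f^[n + 1] = id) : Function.Bijective f :=
  Function.bijective_iff_has_inverse.mpr
    ⟨f^[n], fun x => by rw [← Function.iterate_succ_apply, h, id],
      fun x => by rw [← Function.iterate_succ_apply' f n x, h, id]⟩

section ShiftSum

variable {G R : Type*} [AddCommGroup G] [CommRing R] [CharP R 2]

def shiftSum (a b c : G) (x : G → R) (i : G) : R :=
  x (i + a) + x (i + b) + x (i + c)

theorem shiftSum_comp_self (a b c : G) :
    shiftSum a b c ∘ shiftSum a b c = (shiftSum (2 • a) (2 • b) (2 • c) : (G → R) → G → R) := by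
  funext x i
  simp only [Function.comp_apply, shiftSum, two_nsmul, ← add_assoc]
  rw [add_right_comm i b a, add_right_comm i c a, add_right_comm i c b]
  linear_combination (x (i + a + b) + x (i + a + c) + x (i + b + c)) * CharTwo.two_eq_zero (R := R)

theorem shiftSum_iterate_two_pow (a b c : G) (m : ℕ) :
    (shiftSum a b c)^[2 ^ m] =
      (shiftSum (2 ^ m • a) (2 ^ m • b) (2 ^ m • c) : (G → R) → G → R) := by
  induction m generalizing a b c with
  | zero => simp
  | succ m ih =>
    have hsq : (shiftSum a b c : (G → R) → G → R)^[2] = shiftSum a b c ∘ shiftSum a b c := rfl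
    rw [pow_succ', Function.iterate_mul, hsq, shiftSum_comp_self, ih, mul_nsmul, mul_nsmul,
      mul_nsmul]

theorem shiftSum_zero : (shiftSum 0 0 0 : (G → R) → G → R) = id := by
  funext x i
  simp only [shiftSum, add_zero, CharTwo.add_self_eq_zero, zero_add, id]

theorem shiftSum_bijective_of_two_pow_nsmul_eq_zero {a b c : G} {m : ℕ} (ha : 2 ^ m • a = 0)
    (hb : 2 ^ m • b = 0) (hc : 2 ^ m • c = 0) :
    Function.Bijective (shiftSum a b c : (G → R) → G → R) := by
  apply Function.bijective_of_iterate_succ_eq_id (n := 2 ^ m - 1)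
  rw [Nat.sub_add_cancel Nat.one_le_two_pow, shiftSum_iterate_two_pow, ha, hb, hc, shiftSum_zero]

end ShiftSum

/-- The 3-input-XOR linear layer `θ` of Gleeok-128 on `n = 2^k` bits, with indices
taken modulo `n`, is a bijection. -/
theorem theta_bijective (k t₀ t₁ t₂ : ℕ) :
    Function.Bijective (fun (x : Fin (2 ^ k) → ZMod 2) (i : Fin (2 ^ k)) =>
      x (i + (t₀ : Fin (2 ^ k))) + x (i + (t₁ : Fin (2 ^ k))) + x (i + (t₂ : Fin (2 ^ k)))) := by
  have hexp (t : Fin (2 ^ k)) : 2 ^ k • t = 0 := by simpa using card_nsmul_eq_zero (x := t)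
  exact shiftSum_bijective_of_two_pow_nsmul_eq_zero (hexp _) (hexp _) (hexp _)
end
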